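/- arXiv:2305.09145 — 4 statements merged into one kernel-verified Lean document; each statement's English description precedes it below -/
import Mathlib

section
/- Let A be an arrangement of hyperplanes in an n-dimensional real vector space. Then the number of regions of A equals the sum over all central subarrangements B ⊆ A of (-1)^{|B| - rank(B)}, where rank(B) is the dimension of the span of the normal vectors of the hyperplanes in B. -/
/-!
Regions are classified by sign vectors: for `P ⊆ A`, the cell of points lying on the positive side
of exactly the hyperplanes in `P` is open and convex, and these cells partition the complement, so
its connected components are the nonempty cells. Adding a hyperplane `H` to `A` splits exactly the
cells that meet `H` into two: a convex cell with points on both sides of `H` meets `H`, and an open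
cell meeting `H` has points on both sides. Hence `r(A ∪ {H}) = r(A) + r(A^H)`, where `A^H` is the
arrangement induced on `H`. The alternating sum obeys the same recursion, because the central
subsets containing `H` correspond to the central subsets of `A^H`, with one more element and rank
one higher. Restriction can produce degenerate members with zero normal vector; such a member is
either empty, and changes neither side, or the whole space, and then both sides vanish.
-/

open scoped Classical

open Finset Module Submodule Filter Topology

theorem card_connectedComponents_eq_card_range {X Y : Type*} [TopologicalSpace X] {φ : X → Y}
    (hφ : IsLocallyConstant φ) (hfib : ∀ y, IsPreconnected (φ ⁻¹' {y})) :
    Nat.card (ConnectedComponents X) = Nat.card (Set.range φ) := by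
  refine Nat.card_congr
    ((Quotient.congrRight fun x y => ?_).trans (Setoid.quotientKerEquivRange φ))
  change connectedComponent x = connectedComponent y ↔ φ x = φ y
  constructor
  · intro h
    exact hφ.apply_eq_of_isPreconnected isPreconnected_connectedComponent
      (h ▸ mem_connectedComponent) mem_connectedComponent
  · intro h
    exact connectedComponent_eq ((hfib (φ x)).subset_connectedComponent rfl h.symm)

theorem Module.Dual.ker_dualRestrict_ker {K M : Type*} [Field K] [AddCommGroup M] [Module K M]
    (φ : Dual K M) : LinearMap.ker (LinearMap.ker φ).dualRestrict = K ∙ φ := by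
  ext ψ
  rw [dualRestrict_ker_eq_dualAnnihilator, mem_dualAnnihilator, mem_span_singleton]
  constructor
  · intro hψ
    have := mem_span_of_iInf_ker_le_ker (ι := Unit) (L := fun _ => φ) (K := ψ)
      (by rw [ciInf_const]; exact fun x hx => hψ x hx)
    simpa [Set.range_const, mem_span_singleton] using this
  · rintro ⟨c, rfl⟩ w hw
    simp [LinearMap.mem_ker.1 hw]

theorem Submodule.finrank_map_add_one {K M N : Type*} [Field K] [AddCommGroup M] [Module K M]
    [AddCommGroup N] [Module K N] (D : M →ₗ[K] N) {P : Submodule K M} [FiniteDimensional K P]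
    {v : M} (hv : v ≠ 0) (hvP : v ∈ P) (hker : LinearMap.ker D = K ∙ v) :
    finrank K (P.map D) + 1 = finrank K P := by
  have hkerP : LinearMap.ker (D.domRestrict P) = (K ∙ v).comap P.subtype := by
    rw [LinearMap.ker_domRestrict, hker]
  rw [← (D.domRestrict P).finrank_range_add_finrank_ker, LinearMap.range_domRestrict, hkerP,
    LinearEquiv.finrank_eq (comapSubtypeEquivOfLe ((span_singleton_le_iff_mem _ _).2 hvP)),
    finrank_span_singleton hv]

section Convex

variable {V : Type*} [AddCommGroup V] [Module ℝ V]

theorem Convex.exists_apply_eq {C : Set V} (hC : Convex ℝ C) (φ : V →ₗ[ℝ] ℝ) {β : ℝ}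
    {xn xp : V} (hxn : xn ∈ C) (hxp : xp ∈ C) (hn : φ xn < β) (hp : β < φ xp) :
    ∃ x ∈ C, φ x = β := by
  have hd : 0 < φ xp - φ xn := by linarith
  set θ := (β - φ xn) / (φ xp - φ xn)
  refine ⟨AffineMap.lineMap xn xp θ, hC.lineMap_mem hxn hxp ⟨?_, ?_⟩, ?_⟩
  · exact div_nonneg (by linarith) hd.le
  · exact (div_le_one hd).2 (by linarith)
  · rw [AffineMap.lineMap_apply_module, map_add, map_smul, map_smul, smul_eq_mul, smul_eq_mul]
    have hθ : θ * (φ xp - φ xn) = β - φ xn := div_mul_cancel₀ _ hd.ne'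
    linear_combination hθ

/-- A nonempty `C` meets both open sides of `φ = β` if it meets the hyperplane, and exactly one side
otherwise. -/
theorem ite_nonempty_lt_add_ite_nonempty_gt {C : Set V} (hC : Convex ℝ C)
    (hopen : ∀ x ∈ C, ∀ v, ∀ᶠ δ in 𝓝 (0 : ℝ), x + δ • v ∈ C) (φ : V →ₗ[ℝ] ℝ) (β : ℝ)
    (hφβ : φ ≠ 0 ∨ β ≠ 0) :
    (if (C ∩ {x | φ x < β}).Nonempty then 1 else 0) +
        (if (C ∩ {x | β < φ x}).Nonempty then 1 else 0) =
      (if C.Nonempty then 1 else 0) + (if (C ∩ {x | φ x = β}).Nonempty then 1 else 0) := by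
  have hsplit : (C ∩ {x | φ x = β}).Nonempty →
      (C ∩ {x | φ x < β}).Nonempty ∧ (C ∩ {x | β < φ x}).Nonempty := by
    rintro ⟨x, hx, hxβ⟩
    have hφ : φ ≠ 0 := by
      rintro rfl
      exact hφβ.resolve_left (not_not.2 rfl) hxβ.symm
    obtain ⟨v, hv⟩ := φ.surjective_of_ne_zero hφ 1
    have hline := hopen x hx v
    obtain ⟨δp, hp, hδp : 0 < δp⟩ :=
      ((hline.filter_mono nhdsWithin_le_nhds).and (self_mem_nhdsWithin (s := Set.Ioi 0))).exists
    obtain ⟨δn, hn, hδn : δn < 0⟩ :=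
      ((hline.filter_mono nhdsWithin_le_nhds).and (self_mem_nhdsWithin (s := Set.Iio 0))).exists
    refine ⟨⟨_, hn, ?_⟩, ⟨_, hp, ?_⟩⟩ <;>
      simp only [Set.mem_ofPred_eq, map_add, map_smul, hv, smul_eq_mul, hxβ.symm] <;> linarith
  have hjoin : (C ∩ {x | φ x < β}).Nonempty → (C ∩ {x | β < φ x}).Nonempty →
      (C ∩ {x | φ x = β}).Nonempty := by
    rintro ⟨xn, hxn, hn⟩ ⟨xp, hxp, hp⟩
    exact hC.exists_apply_eq φ hxn hxp hn hp
  have hcover : C.Nonempty → (C ∩ {x | φ x < β}).Nonempty ∨ (C ∩ {x | β < φ x}).Nonempty ∨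
      (C ∩ {x | φ x = β}).Nonempty := by
    rintro ⟨x, hx⟩
    rcases lt_trichotomy (φ x) β with h | h | h
    exacts [Or.inl ⟨x, hx, h⟩, Or.inr (Or.inr ⟨x, hx, h⟩), Or.inr (Or.inl ⟨x, hx, h⟩)]
  have hsub : ∀ {p : V → Prop}, (C ∩ {x | p x}).Nonempty → C.Nonempty :=
    fun h => h.mono Set.inter_subset_left
  split_ifs <;> simp_all

end Convex

namespace HyperplaneArrangement

variable {ι V : Type*} [AddCommGroup V] [Module ℝ V]

def signCell (f : ι → V →ₗ[ℝ] ℝ) (b : ι → ℝ) (s P : Finset ι) : Set V :=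
  {x | ∀ i ∈ s, if i ∈ P then b i < f i x else f i x < b i}

noncomputable def numRegions (f : ι → V →ₗ[ℝ] ℝ) (b : ι → ℝ) (s : Finset ι) : ℕ :=
  #{P ∈ s.powerset | (signCell f b s P).Nonempty}

def IsCentral (f : ι → V →ₗ[ℝ] ℝ) (b : ι → ℝ) (B : Finset ι) : Prop :=
  ∃ x, ∀ i ∈ B, f i x = b i

noncomputable def zaslavskySum (f : ι → V →ₗ[ℝ] ℝ) (b : ι → ℝ) (s : Finset ι) : ℤ :=
  ∑ B ∈ s.powerset with IsCentral f b B, (-1) ^ (#B - finrank ℝ (span ℝ (f '' B)))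

variable {f : ι → V →ₗ[ℝ] ℝ} {b : ι → ℝ} {s P : Finset ι} {j : ι}

theorem signCell_eq_biInter :
    signCell f b s P = ⋂ i ∈ s, f i ⁻¹' (if i ∈ P then Set.Ioi (b i) else Set.Iio (b i)) := by
  ext x
  simp only [signCell, Set.mem_iInter]
  grind

theorem convex_signCell : Convex ℝ (signCell f b s P) := by
  rw [signCell_eq_biInter]
  refine convex_iInter₂ fun i _ => ?_
  split_ifs
  exacts [(convex_Ioi _).linear_preimage _, (convex_Iio _).linear_preimage _]

theorem eventually_add_smul_mem_signCell {x : V} (hx : x ∈ signCell f b s P) (v : V) :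
    ∀ᶠ δ in 𝓝 (0 : ℝ), x + δ • v ∈ signCell f b s P := by
  refine (eventually_all_finset s).2 fun i hi => ?_
  have hline : Tendsto (fun δ : ℝ => f i (x + δ • v)) (𝓝 0) (𝓝 (f i x)) := by
    refine Continuous.tendsto' ?_ 0 _ (by simp)
    simp only [map_add, map_smul, smul_eq_mul]
    fun_prop
  have := hx i hi
  split_ifs at this ⊢
  exacts [hline.eventually_const_lt this, hline.eventually_lt_const this]

theorem signCell_subset : signCell f b s P ⊆ {x | ∀ i ∈ s, f i x ≠ b i} := fun x hx i hi => by
  have := hx i hi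
  split_ifs at this
  exacts [this.ne', this.ne]

theorem mem_signCell_univ_iff [Fintype ι] {x : V} (hx : ∀ i, f i x ≠ b i) (P : Finset ι) :
    x ∈ signCell f b univ P ↔ ({i | b i < f i x} : Finset ι) = P := by
  simp only [signCell, Set.mem_ofPred_eq, mem_univ, true_imp_iff, Finset.ext_iff, mem_filter,
    true_and]
  refine forall_congr' fun i => ?_
  by_cases hi : i ∈ P <;> simp only [hi, if_true, if_false, iff_true, iff_false, not_lt]
  exact ⟨le_of_lt, fun h => lt_of_le_of_ne h (hx i)⟩

theorem signCell_insert_insert (hj : j ∉ s) :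
    signCell f b (insert j s) (insert j P) = signCell f b s P ∩ {x | b j < f j x} := by
  ext x
  simp only [signCell, forall_mem_insert, mem_insert_self, if_true, Set.mem_inter_iff,
    Set.mem_ofPred_eq]
  rw [and_comm]
  refine and_congr_left' (forall₂_congr fun i hi => ?_)
  simp only [mem_insert, ne_of_mem_of_not_mem hi hj, false_or]

theorem signCell_insert_of_notMem (hjP : j ∉ P) :
    signCell f b (insert j s) P = signCell f b s P ∩ {x | f j x < b j} := by
  ext x
  simp only [signCell, forall_mem_insert, hjP, if_false, Set.mem_inter_iff, Set.mem_ofPred_eq]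
  exact and_comm

theorem numRegions_insert (hj : j ∉ s) (hfb : f j ≠ 0 ∨ b j ≠ 0) :
    numRegions f b (insert j s) = numRegions f b s +
      #{P ∈ s.powerset | (signCell f b s P ∩ {x | f j x = b j}).Nonempty} := by
  simp only [numRegions, card_filter]
  rw [sum_powerset_insert hj, ← sum_add_distrib, ← sum_add_distrib]
  refine sum_congr rfl fun P hP => ?_
  rw [signCell_insert_of_notMem fun h => hj (mem_powerset.1 hP h), signCell_insert_insert hj]
  exact ite_nonempty_lt_add_ite_nonempty_gt convex_signCell
    (fun _ hx => eventually_add_smul_mem_signCell hx) (f j) (b j) hfb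

theorem numRegions_eq_zero (hj : j ∈ s) (hf : f j = 0) (hb : b j = 0) :
    numRegions f b s = 0 := by
  refine card_eq_zero.2 (filter_eq_empty_iff.2 fun P _ ⟨x, hx⟩ => ?_)
  have := hx j hj
  simp only [hf, hb, LinearMap.zero_apply, lt_self_iff_false, ite_self] at this

/-- With `restrictConst`, the arrangement induced on the hyperplane `f j = b j`, transported to
`ker (f j)` along `w ↦ x₀ + w` for a point `x₀` of the hyperplane. -/
def restrictFun (f : ι → V →ₗ[ℝ] ℝ) (j : ι) : ι → LinearMap.ker (f j) →ₗ[ℝ] ℝ :=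
  fun i => (LinearMap.ker (f j)).dualRestrict (f i)

def restrictConst (f : ι → V →ₗ[ℝ] ℝ) (b : ι → ℝ) (x₀ : V) : ι → ℝ :=
  fun i => b i - f i x₀

theorem range_add_ker {x₀ : V} (hx₀ : f j x₀ = b j) :
    Set.range (fun w : LinearMap.ker (f j) => x₀ + w) = {x | f j x = b j} := by
  ext x
  refine ⟨?_, fun hx => ⟨⟨x - x₀, ?_⟩, add_sub_cancel _ _⟩⟩
  · rintro ⟨w, rfl⟩
    simp [hx₀, LinearMap.mem_ker.1 w.2]
  · rw [LinearMap.mem_ker, map_sub, hx₀, sub_eq_zero]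
    exact hx

theorem signCell_restrict (x₀ : V) :
    signCell (restrictFun f j) (restrictConst f b x₀) s P =
      (fun w : LinearMap.ker (f j) => x₀ + w) ⁻¹' signCell f b s P := by
  ext w
  simp only [signCell, restrictFun, restrictConst, dualRestrict_apply, Set.mem_preimage,
    Set.mem_ofPred_eq, map_add]
  refine forall₂_congr fun i _ => ?_
  split_ifs <;> constructor <;> intro <;> linarith

theorem numRegions_restrict {x₀ : V} (hx₀ : f j x₀ = b j) :
    numRegions (restrictFun f j) (restrictConst f b x₀) s =
      #{P ∈ s.powerset | (signCell f b s P ∩ {x | f j x = b j}).Nonempty} := by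
  simp only [numRegions, signCell_restrict, ← range_add_ker hx₀]
  congr! 3 with P
  simp [Set.Nonempty, and_comm]

theorem isCentral_restrict_iff {x₀ : V} (hx₀ : f j x₀ = b j) {B : Finset ι} :
    IsCentral (restrictFun f j) (restrictConst f b x₀) B ↔ IsCentral f b (insert j B) := by
  have : IsCentral f b (insert j B) ↔ ∃ x ∈ {x | f j x = b j}, ∀ i ∈ B, f i x = b i := by
    simp [IsCentral]
  rw [this, ← range_add_ker hx₀, Set.exists_range_iff]
  simp only [IsCentral, restrictFun, restrictConst, dualRestrict_apply, map_add]
  refine exists_congr fun w => forall₂_congr fun i _ => ?_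
  constructor <;> intro <;> linarith

theorem finrank_span_restrictFun_add_one (hf : f j ≠ 0) (B : Finset ι) :
    finrank ℝ (span ℝ (restrictFun f j '' B)) + 1 = finrank ℝ (span ℝ (f '' ↑(insert j B))) := by
  have hspan : span ℝ (restrictFun f j '' B) =
      (span ℝ (f '' ↑(insert j B))).map (LinearMap.ker (f j)).dualRestrict := by
    have hfj : (LinearMap.ker (f j)).dualRestrict (f j) = 0 := by
      ext w
      exact LinearMap.mem_ker.1 w.2
    rw [← span_image, coe_insert, Set.image_insert_eq, Set.image_insert_eq, hfj,
      span_insert_zero, Set.image_image]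
    rfl
  have : FiniteDimensional ℝ (span ℝ (f '' ↑(insert j B))) :=
    FiniteDimensional.span_of_finite ℝ ((insert j B).finite_toSet.image f)
  rw [hspan]
  exact finrank_map_add_one _ hf (subset_span ⟨j, mem_insert_self j B, rfl⟩)
    (Module.Dual.ker_dualRestrict_ker _)

theorem finrank_span_image_le_card (f : ι → V →ₗ[ℝ] ℝ) (B : Finset ι) :
    finrank ℝ (span ℝ (f '' B)) ≤ #B := by
  rw [← coe_image]
  exact (finrank_span_finset_le_card _).trans card_image_le

theorem zaslavskySum_insert (hj : j ∉ s) :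
    zaslavskySum f b (insert j s) = zaslavskySum f b s +
      ∑ B ∈ s.powerset with IsCentral f b (insert j B),
        (-1) ^ (#B + 1 - finrank ℝ (span ℝ (f '' ↑(insert j B)))) := by
  simp only [zaslavskySum, sum_filter]
  rw [sum_powerset_insert hj]
  congr 1
  refine sum_congr rfl fun B hB => ?_
  rw [card_insert_of_notMem fun h => hj (mem_powerset.1 hB h)]

theorem zaslavskySum_restrict (hf : f j ≠ 0) {x₀ : V} (hx₀ : f j x₀ = b j) :
    zaslavskySum (restrictFun f j) (restrictConst f b x₀) s =
      ∑ B ∈ s.powerset with IsCentral f b (insert j B),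
        (-1) ^ (#B + 1 - finrank ℝ (span ℝ (f '' ↑(insert j B)))) := by
  simp only [zaslavskySum, isCentral_restrict_iff hx₀, ← finrank_span_restrictFun_add_one hf,
    Nat.add_sub_add_right]

theorem zaslavskySum_insert_eq_zero (hj : j ∉ s) (hf : f j = 0) (hb : b j = 0) :
    zaslavskySum f b (insert j s) = 0 := by
  have hcentral (B : Finset ι) : IsCentral f b (insert j B) ↔ IsCentral f b B := by
    simp [IsCentral, hf, hb]
  have hspan (B : Finset ι) : span ℝ (f '' ↑(insert j B)) = span ℝ (f '' B) := by
    rw [coe_insert, Set.image_insert_eq, hf, span_insert_zero]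
  rw [zaslavskySum_insert hj]
  simp only [hcentral]
  rw [zaslavskySum, ← sum_add_distrib]
  refine sum_eq_zero fun B _ => ?_
  rw [hspan, Nat.sub_add_comm (finrank_span_image_le_card f B), pow_succ]
  ring

theorem numRegions_insert_of_eq_zero (hj : j ∉ s) (hf : f j = 0) (hb : b j ≠ 0) :
    numRegions f b (insert j s) = numRegions f b s := by
  rw [numRegions_insert hj (Or.inr hb), add_eq_left, card_eq_zero, filter_eq_empty_iff]
  rintro P - ⟨x, -, hx⟩
  exact hb (by simpa [hf] using hx.symm)

theorem zaslavskySum_insert_of_eq_zero (hj : j ∉ s) (hf : f j = 0) (hb : b j ≠ 0) :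
    zaslavskySum f b (insert j s) = zaslavskySum f b s := by
  rw [zaslavskySum_insert hj, add_eq_left, sum_filter]
  refine sum_eq_zero fun B _ => if_neg ?_
  rintro ⟨x, hx⟩
  exact hb (by simpa [hf] using (hx j (mem_insert_self j B)).symm)

theorem numRegions_eq_zaslavskySum (s : Finset ι) (f : ι → V →ₗ[ℝ] ℝ) (b : ι → ℝ) : (numRegions f b s : ℤ) = zaslavskySum f b s := by
  induction s using Finset.induction_on generalizing V b with
  | empty =>
    rw [numRegions, zaslavskySum, powerset_empty, filter_singleton, filter_singleton, if_pos,
      if_pos]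
    · simp
    · exact ⟨0, by simp⟩
    · exact ⟨0, by simp [signCell]⟩
  | insert j s hj ih =>
    by_cases hf : f j = 0
    · by_cases hb : b j = 0
      · rw [numRegions_eq_zero (mem_insert_self j s) hf hb, zaslavskySum_insert_eq_zero hj hf hb,
          Nat.cast_zero]
      · rw [numRegions_insert_of_eq_zero hj hf hb, zaslavskySum_insert_of_eq_zero hj hf hb, ih]
    · obtain ⟨x₀, hx₀⟩ := (f j).surjective_of_ne_zero hf (b j)
      rw [numRegions_insert hj (Or.inl hf), ← numRegions_restrict hx₀, zaslavskySum_insert hj,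
        ← zaslavskySum_restrict hf hx₀, Nat.cast_add, ih, ih]

section Topology

variable {E : Type*} [AddCommGroup E] [Module ℝ E] [TopologicalSpace E] {f : ι → E →ₗ[ℝ] ℝ}
  {b : ι → ℝ}

theorem isOpen_signCell (hf : ∀ i, Continuous (f i)) (s P : Finset ι) :
    IsOpen (signCell f b s P) := by
  rw [signCell_eq_biInter]
  refine isOpen_biInter_finset fun i _ => ?_
  split_ifs
  exacts [isOpen_Ioi.preimage (hf i), isOpen_Iio.preimage (hf i)]

theorem card_connectedComponents_compl_eq_numRegions [Fintype ι] [ContinuousAdd E]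
    [ContinuousSMul ℝ E] (hf : ∀ i, Continuous (f i)) :
    Nat.card (ConnectedComponents {x : E // ∀ i, f i x ≠ b i}) = numRegions f b univ := by
  set φ : {x : E // ∀ i, f i x ≠ b i} → Finset ι := fun x => {i | b i < f i x}
  have hfiber (P : Finset ι) : φ ⁻¹' {P} = Subtype.val ⁻¹' signCell f b univ P := by
    ext x
    exact (mem_signCell_univ_iff x.2 P).symm
  have hcell (P : Finset ι) :
      signCell f b univ P ⊆ Set.range (Subtype.val : {x : E // ∀ i, f i x ≠ b i} → E) :=
    fun x hx => ⟨⟨x, fun i => signCell_subset hx i (mem_univ i)⟩, rfl⟩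
  rw [card_connectedComponents_eq_card_range (φ := φ)]
  · have hrange : Set.range φ =
        (({P ∈ univ.powerset | (signCell f b univ P).Nonempty} : Finset (Finset ι)) : Set _) := by
      ext P
      simp only [coe_filter, mem_powerset, subset_univ, true_and, Set.mem_ofPred_eq]
      constructor
      · rintro ⟨x, rfl⟩
        exact ⟨x, (mem_signCell_univ_iff x.2 _).2 rfl⟩
      · rintro ⟨x, hx⟩
        obtain ⟨y, rfl⟩ := hcell P hx
        exact ⟨y, (mem_signCell_univ_iff y.2 P).1 hx⟩
    rw [hrange, Nat.card_coe_set_eq, Set.ncard_coe_finset]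
    rfl
  · exact IsLocallyConstant.iff_isOpen_fiber.2 fun P =>
      hfiber P ▸ (isOpen_signCell hf univ P).preimage continuous_subtype_val
  · intro P
    rw [hfiber]
    refine (Topology.IsInducing.induced Subtype.val).isPreconnected_image.mp ?_
    rw [Set.image_preimage_eq_of_subset (hcell P)]
    exact convex_signCell.isPreconnected

end Topology

end HyperplaneArrangement

theorem finrank_span_image_innerₗ {E : Type*} [NormedAddCommGroup E] [InnerProductSpace ℝ E]
    (S : Set E) : finrank ℝ (span ℝ (innerₗ E '' S)) = finrank ℝ (span ℝ S) := by
  have hinj : Function.Injective (innerₗ E) := fun x y h =>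
    ext_inner_right ℝ fun v => by simpa using LinearMap.congr_fun h v
  rw [span_image]
  exact (LinearEquiv.finrank_eq (equivMapOfInjective _ hinj _)).symm

open HyperplaneArrangement in
theorem stmt_2_general (n m : ℕ) (a : Fin m → EuclideanSpace ℝ (Fin n)) (b : Fin m → ℝ) :
    (Nat.card (ConnectedComponents
        {x : EuclideanSpace ℝ (Fin n) // ∀ i, inner ℝ (a i) x ≠ b i}) : ℤ) =
      ∑ B ∈ Finset.univ.filter (fun B : Finset (Fin m) =>
          (⋂ i ∈ B, {x : EuclideanSpace ℝ (Fin n) | inner ℝ (a i) x = b i}).Nonempty),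
        (-1 : ℤ) ^ (B.card - Module.finrank ℝ (Submodule.span ℝ (a '' ↑B))) := by
  let f : Fin m → EuclideanSpace ℝ (Fin n) →ₗ[ℝ] ℝ := fun i => innerₗ _ (a i)
  have hcont (i : Fin m) : Continuous (f i) := (f i).continuous_of_finiteDimensional
  have hregions : Nat.card (ConnectedComponents
      {x : EuclideanSpace ℝ (Fin n) // ∀ i, inner ℝ (a i) x ≠ b i}) = numRegions f b univ :=
    card_connectedComponents_compl_eq_numRegions hcont
  rw [hregions, numRegions_eq_zaslavskySum, zaslavskySum, powerset_univ]
  refine sum_congr (filter_congr fun B _ => ?_) fun B _ => ?_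
  · simp [IsCentral, Set.Nonempty, f]
  · rw [← finrank_span_image_innerₗ, Set.image_image]

/-- Zaslavsky's theorem: the number of regions of an arrangement `A` of
hyperplanes in `ℝ^n` equals `∑_{B ⊆ A central} (-1)^{|B| - rank B}`, where a
subarrangement `B` is central if the intersection of its hyperplanes is nonempty, and
`rank B` is the dimension of the span of the normal vectors of the hyperplanes in `B`. -/
theorem stmt_2 (n m : ℕ) (a : Fin m → EuclideanSpace ℝ (Fin n)) (b : Fin m → ℝ)
    (ha : ∀ i, a i ≠ 0) :
    (Nat.card (ConnectedComponents
        {x : EuclideanSpace ℝ (Fin n) // ∀ i, inner ℝ (a i) x ≠ b i}) : ℤ) =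
      ∑ B ∈ Finset.univ.filter (fun B : Finset (Fin m) =>
          (⋂ i ∈ B, {x : EuclideanSpace ℝ (Fin n) | inner ℝ (a i) x = b i}).Nonempty),
        (-1 : ℤ) ^ (B.card - Module.finrank ℝ (Submodule.span ℝ (a '' ↑B))) :=
  stmt_2_general n m a b
end

section
/- For integers d ≥ 1 and n ≥ d, the ratio (2n·sum_{i=0}^{d-1} binom(n-1, i) + 2d·sum_{i=0}^{d-1} binom(n, i)) / (sum_{i=0}^{d} binom(n, i)) is at most 2d·(1 + d/(n - d + 1)). -/
/-!
Write `S = ∑_{i ≤ d} C(n,i)`. Termwise, `n·C(n-1,i) = (i+1)·C(n,i+1) ≤ d·C(n,i+1)` and, since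
`C(n,i)·(n-i) = C(n,i+1)·(i+1)`, also `(n-d+1)·C(n,i) ≤ d·C(n,i+1)` for `i < d`. Summing over
`i < d` gives `n·∑_{i<d} C(n-1,i) ≤ d·S` and `(n-d+1)·∑_{i<d} C(n,i) ≤ d·S`, so the numerator is
at most `2d·S + 2d·d·S/(n-d+1)`.
-/

open Finset

namespace Nat

theorem mul_choose_pred_eq (n i : ℕ) : n * (n - 1).choose i = n.choose (i + 1) * (i + 1) := by
  cases n with
  | zero => simp
  | succ m => simpa using add_one_mul_choose_eq m i

theorem sub_add_one_mul_choose_le {n d i : ℕ} (hi : i < d) (hd : d ≤ n) :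
    (n - d + 1) * n.choose i ≤ d * n.choose (i + 1) := by
  refine Nat.le_of_mul_le_mul_right ?_ (Nat.succ_pos i)
  calc (n - d + 1) * n.choose i * (i + 1)
      = n.choose i * ((n - d + 1) * (i + 1)) := by ring
    _ ≤ n.choose i * ((n - i) * d) := by gcongr <;> omega
    _ = d * (n.choose (i + 1) * (i + 1)) := by rw [choose_succ_right_eq]; ring
    _ = d * n.choose (i + 1) * (i + 1) := by ring

theorem sum_range_le_mul_sum_range_succ_choose {n d : ℕ} (f : ℕ → ℕ)
    (hf : ∀ i < d, f i ≤ d * n.choose (i + 1)) :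
    ∑ i ∈ range d, f i ≤ d * ∑ i ∈ range (d + 1), n.choose i :=
  calc ∑ i ∈ range d, f i
      ≤ ∑ i ∈ range d, d * n.choose (i + 1) := sum_le_sum fun i hi => hf i (mem_range.mp hi)
    _ = d * ∑ i ∈ range d, n.choose (i + 1) := (mul_sum _ _ _).symm
    _ ≤ d * ∑ i ∈ range (d + 1), n.choose i := by
        rw [sum_range_succ' (fun i => n.choose i)]
        exact Nat.mul_le_mul_left _ (Nat.le_add_right _ _)

theorem mul_sum_range_choose_pred_le (n d : ℕ) :
    n * ∑ i ∈ range d, (n - 1).choose i ≤ d * ∑ i ∈ range (d + 1), n.choose i := by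
  rw [mul_sum]
  refine sum_range_le_mul_sum_range_succ_choose _ fun i hi => ?_
  rw [mul_choose_pred_eq, mul_comm]
  gcongr
  omega

theorem sub_add_one_mul_sum_range_choose_le {n d : ℕ} (hd : d ≤ n) :
    (n - d + 1) * ∑ i ∈ range d, n.choose i ≤ d * ∑ i ∈ range (d + 1), n.choose i := by
  rw [mul_sum]
  exact sum_range_le_mul_sum_range_succ_choose _ fun i hi => sub_add_one_mul_choose_le hi hd

end Nat

theorem stmt_5_general (d n : ℕ) (hn : d ≤ n) :
    (2 * (n : ℝ) * ∑ i ∈ Finset.range d, ((n - 1).choose i : ℝ) +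
        2 * (d : ℝ) * ∑ i ∈ Finset.range d, (n.choose i : ℝ)) /
        (∑ i ∈ Finset.range (d + 1), (n.choose i : ℝ)) ≤
      2 * (d : ℝ) * (1 + (d : ℝ) / ((n : ℝ) - (d : ℝ) + 1)) := by
  have hS : 0 < ∑ i ∈ range (d + 1), (n.choose i : ℝ) := by
    exact_mod_cast sum_pos' (fun _ _ => Nat.zero_le _) ⟨0, by simp, by simp⟩
  have hA := Nat.mul_sum_range_choose_pred_le n d
  have hB := Nat.sub_add_one_mul_sum_range_choose_le hn
  rw [← Nat.cast_le (α := ℝ)] at hA hB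
  push_cast [Nat.cast_sub hn] at hA hB
  set A : ℝ := ∑ i ∈ range d, ((n - 1).choose i : ℝ)
  set B : ℝ := ∑ i ∈ range d, (n.choose i : ℝ)
  set S : ℝ := ∑ i ∈ range (d + 1), (n.choose i : ℝ)
  have he : 0 < (n : ℝ) - d + 1 := by
    have : (d : ℝ) ≤ n := by exact_mod_cast hn
    linarith
  replace hB : B ≤ d * S / ((n : ℝ) - d + 1) := by
    rw [le_div_iff₀ he]
    linarith
  rw [div_le_iff₀ hS]
  calc 2 * n * A + 2 * d * B ≤ 2 * (d * S) + 2 * d * (d * S / ((n : ℝ) - d + 1)) := by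
        rw [mul_assoc 2 (n : ℝ)]
        gcongr
    _ = 2 * d * (1 + d / ((n : ℝ) - d + 1)) * S := by ring

/-- for integers `d ≥ 1` and `n ≥ d`,
`(2n·∑_{i=0}^{d-1} C(n-1,i) + 2d·∑_{i=0}^{d-1} C(n,i)) / ∑_{i=0}^{d} C(n,i)
  ≤ 2d·(1 + d/(n-d+1))`. -/
theorem stmt_5 (d n : ℕ) (hd : 1 ≤ d) (hn : d ≤ n) :
    (2 * (n : ℝ) * ∑ i ∈ Finset.range d, ((n - 1).choose i : ℝ) +
        2 * (d : ℝ) * ∑ i ∈ Finset.range d, (n.choose i : ℝ)) /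
        (∑ i ∈ Finset.range (d + 1), (n.choose i : ℝ)) ≤
      2 * (d : ℝ) * (1 + (d : ℝ) / ((n : ℝ) - (d : ℝ) + 1)) :=
  stmt_5_general d n hn
end

section
/- Let f(L) denote the total face count bound defined recursively by: f(1) = 2n·sum_{i=0}^{d-1} binom(n-1, i) + 2d·sum_{i=0}^{d-1} binom(n, i), and for L ≥ 2, f(L) = 2n·sum_{i=0}^{d-1} binom(n-1, i)·r(L-1) + sum_{i=0}^{d-1} binom(n, i)·f(L-1), where r(L-1) = (prod over L-1 layers) sum_{j=0}^{d} binom(n, j) ≤ (sum_{j=0}^{d} binom(n, j))^{L-1}. Then for fixed d, f(L) = (2/((d-1)!(d!)^{L-1}))·n^{dL} + O(n^{dL-1}) as n → ∞. -/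
/-!
Write `HasLeadingTerm g c k` for `g n = c n^k + O(n^(k-1))`; this is stable under adding
lower-order terms, products and powers. Since `k! * (n.choose k)` is the monic degree-`k`
polynomial `descPochhammer k` evaluated at `n`, the sum `∑_{i ≤ m} C(n - a, i)` has leading term
`n^m / m!`. By induction on the number of layers, the first summand of the recursion has leading
term `2n · n^(d-1)/(d-1)! · (n^d/d!)^(L-1)`, while the second is
`O(n^(d-1)) · O(n^(d(L-1)))`, of lower order.
-/

open Asymptotics Filter Finset Polynomial Nat

def HasLeadingTerm (g : ℕ → ℝ) (c : ℝ) (k : ℤ) : Prop :=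
  (fun n : ℕ => g n - c * (n : ℝ) ^ k) =O[atTop] fun n : ℕ => (n : ℝ) ^ (k - 1)

lemma isBigO_zpow_zpow_of_le {j k : ℤ} (h : j ≤ k) :
    (fun n : ℕ => (n : ℝ) ^ j) =O[atTop] fun n : ℕ => (n : ℝ) ^ k := by
  refine IsBigO.of_bound 1 ?_
  filter_upwards [eventually_ge_atTop 1] with n hn
  have hn : (1 : ℝ) ≤ n := by exact_mod_cast hn
  rw [one_mul, Real.norm_of_nonneg (by positivity), Real.norm_of_nonneg (by positivity)]
  exact zpow_le_zpow_right₀ hn h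

lemma Asymptotics.IsBigO.mul_zpow {f g : ℕ → ℝ} {a b c : ℤ}
    (hf : f =O[atTop] fun n : ℕ => (n : ℝ) ^ a) (hg : g =O[atTop] fun n : ℕ => (n : ℝ) ^ b)
    (habc : a + b = c) :
    (fun n => f n * g n) =O[atTop] fun n : ℕ => (n : ℝ) ^ c := by
  refine (hf.mul hg).trans (EventuallyEq.isBigO ?_)
  filter_upwards [eventually_ne_atTop 0] with n hn
  rw [← habc, zpow_add₀ (Nat.cast_ne_zero.mpr hn)]

namespace HasLeadingTerm

variable {g g' : ℕ → ℝ} {c c' : ℝ} {k k' : ℤ}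

lemma congr (h : HasLeadingTerm g c k) (hg : ∀ n, g n = g' n) (hc : c = c') (hk : k = k') :
    HasLeadingTerm g' c' k' := by
  obtain rfl := funext hg
  subst hc hk
  exact h

lemma congr_eventually (h : HasLeadingTerm g c k) (hg : g =ᶠ[atTop] g') :
    HasLeadingTerm g' c k :=
  h.congr' (hg.mono fun n hn => by simp only [hn]) EventuallyEq.rfl

lemma isBigO (h : HasLeadingTerm g c k) : g =O[atTop] fun n : ℕ => (n : ℝ) ^ k := by
  have hlead : (fun n : ℕ => c * (n : ℝ) ^ k) =O[atTop] fun n : ℕ => (n : ℝ) ^ k :=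
    (isBigO_refl _ _).const_mul_left c
  simpa using (h.trans (isBigO_zpow_zpow_of_le (by omega))).add hlead

lemma add_isBigO {h : ℕ → ℝ} {j : ℤ} (hg : HasLeadingTerm g c k)
    (hh : h =O[atTop] fun n : ℕ => (n : ℝ) ^ j) (hjk : j < k) :
    HasLeadingTerm (fun n => g n + h n) c k :=
  (hg.add (hh.trans (isBigO_zpow_zpow_of_le (by omega)))).congr_left fun n => by ring

lemma mul (h : HasLeadingTerm g c k) (h' : HasLeadingTerm g' c' k') :
    HasLeadingTerm (fun n => g n * g' n) (c * c') (k + k') := by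
  have hlead : (fun n : ℕ => c * (n : ℝ) ^ k) =O[atTop] fun n : ℕ => (n : ℝ) ^ k :=
    (isBigO_refl _ _).const_mul_left c
  have herr := (h.mul_zpow h'.isBigO (c := k + k' - 1) (by ring)).add
    (hlead.mul_zpow h' (c := k + k' - 1) (by ring))
  refine herr.congr' ?_ EventuallyEq.rfl
  filter_upwards [eventually_ne_atTop 0] with n hn
  rw [zpow_add₀ (Nat.cast_ne_zero.mpr hn)]
  ring

lemma pow (h : HasLeadingTerm g c k) (m : ℕ) :
    HasLeadingTerm (fun n => g n ^ m) (c ^ m) (k * m) := by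
  induction m with
  | zero => simpa [HasLeadingTerm] using isBigO_zero _ _
  | succ m ih =>
    exact (ih.mul h).congr (fun n => by rw [pow_succ]) (by rw [pow_succ]) (by push_cast; ring)

lemma isBigO_pow_pred {k : ℕ} (h : HasLeadingTerm g c k) :
    (fun n => g n - c * (n : ℝ) ^ k) =O[atTop] fun n : ℕ => (n : ℝ) ^ (k - 1) := by
  simp only [← zpow_natCast]
  exact h.trans (isBigO_zpow_zpow_of_le (by omega))

end HasLeadingTerm

lemma hasLeadingTerm_const_mul_pow (c : ℝ) (k : ℕ) :
    HasLeadingTerm (fun n => c * (n : ℝ) ^ k) c k := by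
  simpa [HasLeadingTerm] using isBigO_zero _ _

lemma Polynomial.hasLeadingTerm_eval (P : ℝ[X]) :
    HasLeadingTerm (fun n => P.eval (n : ℝ)) P.leadingCoeff P.natDegree := by
  have herr : ∀ x : ℝ, P.eval x - P.leadingCoeff * x ^ P.natDegree = P.eraseLead.eval x := by
    intro x
    have := congrArg (eval x) P.eraseLead_add_C_mul_X_pow
    simp only [eval_add, eval_mul, eval_C, eval_pow, eval_X] at this
    linarith
  unfold HasLeadingTerm
  simp only [zpow_natCast, herr]
  obtain h0 | hpos := Nat.eq_zero_or_pos P.natDegree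
  · have : P.eraseLead = 0 := by rw [eq_C_of_natDegree_eq_zero h0, eraseLead_C]
    simpa [this] using isBigO_zero _ _
  · have hdeg : P.eraseLead.degree ≤ (X ^ (P.natDegree - 1) : ℝ[X]).degree := by
      rw [degree_X_pow]
      exact degree_le_of_natDegree_le (eraseLead_natDegree_le P)
    have := (isBigO_atTop_of_degree_le _ _ hdeg).comp_tendsto tendsto_natCast_atTop_atTop
    have hpow (n : ℕ) :
        (n : ℝ) ^ ((P.natDegree : ℤ) - 1) = (X ^ (P.natDegree - 1) : ℝ[X]).eval (n : ℝ) := by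
      rw [eval_pow, eval_X, ← zpow_natCast, Nat.cast_sub hpos, Nat.cast_one]
    simp only [hpow]
    exact this

lemma hasLeadingTerm_choose_sub (a k : ℕ) :
    HasLeadingTerm (fun n => ((n - a).choose k : ℝ)) (k ! : ℝ)⁻¹ k := by
  have hmonic : ((descPochhammer ℝ k).comp (X - C (a : ℝ))).Monic :=
    (monic_descPochhammer ℝ k).comp_X_sub_C _
  have hdeg : ((descPochhammer ℝ k).comp (X - C (a : ℝ))).natDegree = k := by
    rw [natDegree_comp, descPochhammer_natDegree, natDegree_X_sub_C, mul_one]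
  have hP := (C (k ! : ℝ)⁻¹ * (descPochhammer ℝ k).comp (X - C (a : ℝ))).hasLeadingTerm_eval
  rw [leadingCoeff_mul, leadingCoeff_C, hmonic.leadingCoeff, mul_one,
    natDegree_C_mul (by positivity), hdeg] at hP
  refine hP.congr_eventually ?_
  filter_upwards [eventually_ge_atTop a] with n hn
  rw [eval_mul, eval_C, eval_comp, eval_sub, eval_X, eval_C, ← Nat.cast_sub hn,
    descPochhammer_eval_eq_descFactorial, descFactorial_eq_factorial_mul_choose, cast_mul,
    inv_mul_cancel_left₀ (by positivity)]

lemma hasLeadingTerm_sum_range_choose_sub (a m : ℕ) :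
    HasLeadingTerm (fun n => ∑ i ∈ range (m + 1), ((n - a).choose i : ℝ)) (m ! : ℝ)⁻¹ m := by
  have hlow : (fun n => ∑ i ∈ range m, ((n - a).choose i : ℝ)) =O[atTop]
      fun n : ℕ => (n : ℝ) ^ ((m : ℤ) - 1) :=
    IsBigO.fun_sum fun i hi => (hasLeadingTerm_choose_sub a i).isBigO.trans
      (isBigO_zpow_zpow_of_le (by rw [mem_range] at hi; omega))
  exact ((hasLeadingTerm_choose_sub a m).add_isBigO hlow (by omega)).congr
    (fun n => by rw [sum_range_succ, add_comm]) rfl rfl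

/-- let `f n L` be the total face count bound defined recursively by
`f n 1 = 2n·∑_{i=0}^{d-1} C(n-1,i) + 2d·∑_{i=0}^{d-1} C(n,i)` and, for `L ≥ 2`,
`f n L = 2n·∑_{i=0}^{d-1} C(n-1,i)·r(L-1) + ∑_{i=0}^{d-1} C(n,i)·f n (L-1)` where
`r(L-1) = (∑_{j=0}^{d} C(n,j))^{L-1}` (the product over `L-1` equal-width layers).
Then for fixed `d` and `L`, `f n L = (2/((d-1)!(d!)^{L-1}))·n^{dL} + O(n^{dL-1})`. -/
theorem stmt_15 (d L : ℕ) (hd : 1 ≤ d) (hL : 1 ≤ L) (f : ℕ → ℕ → ℝ)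
    (hf1 : ∀ n, f n 1 = 2 * (n : ℝ) * ∑ i ∈ Finset.range d, ((n - 1).choose i : ℝ)
      + 2 * (d : ℝ) * ∑ i ∈ Finset.range d, (n.choose i : ℝ))
    (hfrec : ∀ n M, 2 ≤ M → f n M =
      2 * (n : ℝ) * (∑ i ∈ Finset.range d, ((n - 1).choose i : ℝ))
          * (∑ j ∈ Finset.range (d + 1), (n.choose j : ℝ)) ^ (M - 1)
        + (∑ i ∈ Finset.range d, (n.choose i : ℝ)) * f n (M - 1)) :
    (fun n : ℕ => f n L -
        2 / (((d - 1).factorial : ℝ) * (d.factorial : ℝ) ^ (L - 1)) * (n : ℝ) ^ (d * L))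
      =O[Filter.atTop] fun n : ℕ => (n : ℝ) ^ (d * L - 1) := by
  obtain ⟨m, rfl⟩ : ∃ m, d = m + 1 := ⟨d - 1, by omega⟩
  obtain ⟨l, rfl⟩ : ∃ l, L = l + 1 := ⟨L - 1, by omega⟩
  have h2n := hasLeadingTerm_const_mul_pow 2 1
  have hS := hasLeadingTerm_sum_range_choose_sub 0 m
  have hS₁ := hasLeadingTerm_sum_range_choose_sub 1 m
  have hR := hasLeadingTerm_sum_range_choose_sub 0 (m + 1)
  simp only [Nat.sub_zero] at hS hR
  have hlayers (j : ℕ) : HasLeadingTerm (fun n => f n (j + 1))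
      (2 / (m ! * (m + 1)! ^ j)) ((m + 1) * (j + 1) : ℕ) := by
    induction j with
    | zero =>
      refine ((h2n.mul hS₁).add_isBigO (hS.isBigO.const_mul_left (2 * (m + 1 : ℕ))) ?_).congr
        (fun n => by rw [hf1, pow_one]) (by field_simp) (by push_cast; ring)
      omega
    | succ j ih =>
      refine (((h2n.mul hS₁).mul (hR.pow (j + 1))).add_isBigO
        (hS.isBigO.mul_zpow ih.isBigO rfl) ?_).congr
        (fun n => by rw [hfrec n (j + 1 + 1) (by omega), Nat.add_sub_cancel, pow_one])
        (by rw [inv_pow]; field_simp) (by push_cast; ring)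
      push_cast; linarith
  simpa only [Nat.add_sub_cancel] using (hlayers l).isBigO_pow_pred
end

section
/- For fixed d ≥ 1, with S1(n, L) = n^{dL}/(d^{d(L-1)}·d!) and P1(n, L) = L·n^2 (parameters of a deep network), and S2(m) = 2m·sum_{i=0}^{d-1} binom(m-1, i) + 2d·sum_{i=0}^{d-1} binom(m, i) with m = L·n^2 and P2 = L·n^2 (a shallow network with the same parameter count): for d ≥ 3 and L ≥ 2, the ratio S1/P1 grows at least like n^{dL-2}/(L·d^{d(L-1)}·d!), while S2/P2 is O((L·n^2)^{d-1}); hence for fixed L ≥ 2 and d ≥ 3 with dL - 2 > 2(d-1), S1/P1 / (S2/P2) → ∞ as n → ∞. -/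
open Asymptotics

/-- Lower bound on the maximum number of simplices of an `L`-hidden-layer width-`n`
ReLU network with `d` inputs: `S1(n, L) = n^{dL}/(d^{d(L-1)}·d!)`. -/
noncomputable def S1 (d L n : ℕ) : ℝ :=
  (n : ℝ) ^ (d * L) / ((d : ℝ) ^ (d * (L - 1)) * (d.factorial : ℝ))

/-- Parameter count of both networks: `P(L, n) = L·n²`. -/
def P (L n : ℕ) : ℕ := L * n ^ 2

/-- Upper bound on the number of simplices of a one-hidden-layer ReLU network with `d`
inputs and `m` hidden neurons: `S2(m) = 2m·∑_{i<d} C(m-1,i) + 2d·∑_{i<d} C(m,i)`. -/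
noncomputable def S2 (d m : ℕ) : ℝ :=
  2 * (m : ℝ) * ∑ i ∈ Finset.range d, ((m - 1).choose i : ℝ) +
    2 * (d : ℝ) * ∑ i ∈ Finset.range d, (m.choose i : ℝ)

/-! The deep ratio `S1/P` is exactly `n^(dL-2)` up to a constant. Every binomial coefficient
in `S2 d m` is at most `m^(d-1)`, so `S2 d m / m = O(m^(d-1))`, and with `m = L n²` the shallow
ratio is `O(n^(2(d-1)))`. As `2(d-1) < dL-2`, the shallow ratio is `o` of the deep one, and a
quotient `f/g` of eventually positive functions with `g = o(f)` tends to infinity. -/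

open Filter Finset

theorem tendsto_div_atTop_of_isLittleO {𝕜 α : Type*} [NormedField 𝕜] [LinearOrder 𝕜]
    [IsStrictOrderedRing 𝕜] [OrderTopology 𝕜] {l : Filter α} {f g : α → 𝕜}
    (hgf : g =o[l] f) (hf : ∀ᶠ x in l, 0 < f x) (hg : ∀ᶠ x in l, 0 < g x) :
    Tendsto (fun x => f x / g x) l atTop := by
  have hlim : Tendsto (fun x => g x / f x) l (nhdsWithin 0 (Set.Ioi 0)) :=
    tendsto_nhdsWithin_iff.2
      ⟨hgf.tendsto_div_nhds_zero, (hf.and hg).mono fun x hx => div_pos hx.2 hx.1⟩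
  have hinv := hlim.inv_tendsto_nhdsGT_zero
  simp only [Pi.inv_def, inv_div] at hinv
  exact hinv

theorem Nat.sum_range_choose_le_mul_pow {d k m : ℕ} (hm : 1 ≤ m) (hk : k ≤ m) :
    ∑ i ∈ range d, k.choose i ≤ d * m ^ (d - 1) := by
  calc ∑ i ∈ range d, k.choose i ≤ ∑ _i ∈ range d, m ^ (d - 1) := by
        refine sum_le_sum fun i hi => ?_
        calc k.choose i ≤ k ^ i := Nat.choose_le_pow k i
          _ ≤ m ^ i := Nat.pow_le_pow_left hk i
          _ ≤ m ^ (d - 1) := Nat.pow_le_pow_right hm (Nat.le_sub_one_of_lt (mem_range.1 hi))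
    _ = d * m ^ (d - 1) := by simp

theorem S2_pos {d : ℕ} (hd : d ≠ 0) (m : ℕ) : 0 < S2 d m := by
  have hsum : (1 : ℝ) ≤ ∑ i ∈ range d, (m.choose i : ℝ) := by
    simpa using single_le_sum (f := fun i => (m.choose i : ℝ))
      (fun i _ => by positivity) (mem_range.2 (Nat.pos_of_ne_zero hd))
  unfold S2
  exact add_pos_of_nonneg_of_pos (by positivity) (mul_pos (by positivity) (one_pos.trans_le hsum))

theorem S2_div_le {d m : ℕ} (hm : 1 ≤ m) :
    S2 d m / m ≤ 2 * d * (d + 1) * (m : ℝ) ^ (d - 1) := by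
  have hbound : ∀ k ≤ m, ∑ i ∈ range d, (k.choose i : ℝ) ≤ d * (m : ℝ) ^ (d - 1) :=
    fun k hk => by exact_mod_cast Nat.sum_range_choose_le_mul_pow (d := d) hm hk
  have hm' : (1 : ℝ) ≤ m := by exact_mod_cast hm
  rw [div_le_iff₀ (by positivity)]
  calc S2 d m ≤ 2 * m * (d * (m : ℝ) ^ (d - 1)) + 2 * d * (d * (m : ℝ) ^ (d - 1)) := by
        unfold S2
        gcongr
        exacts [hbound _ (Nat.sub_le m 1), hbound m le_rfl]
    _ ≤ 2 * d * (d + 1) * (m : ℝ) ^ (d - 1) * m := by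
        nlinarith [mul_le_mul_of_nonneg_left hm'
          (by positivity : (0 : ℝ) ≤ d * (d * (m : ℝ) ^ (d - 1)))]

theorem S1_div_P {d L n : ℕ} (hdL : 2 ≤ d * L) (hn : n ≠ 0) :
    S1 d L n / P L n =
      (n : ℝ) ^ (d * L - 2) / ((L : ℝ) * (d : ℝ) ^ (d * (L - 1)) * (d.factorial : ℝ)) := by
  obtain ⟨hd, hL⟩ := Nat.mul_ne_zero_iff.1 (by omega : d * L ≠ 0)
  have hsplit : (n : ℝ) ^ (d * L) = (n : ℝ) ^ (d * L - 2) * (n : ℝ) ^ 2 := by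
    rw [← pow_add, Nat.sub_add_cancel hdL]
  unfold S1 P
  rw [hsplit]
  push_cast
  field_simp

theorem S2_div_isBigO (d : ℕ) :
    (fun m : ℕ => S2 d m / m) =O[atTop] fun m : ℕ => (m : ℝ) ^ (d - 1) := by
  refine IsBigO.of_bound (2 * d * (d + 1)) ?_
  filter_upwards [eventually_ge_atTop 1] with m hm
  rw [Real.norm_of_nonneg (by unfold S2; positivity), Real.norm_of_nonneg (by positivity)]
  exact S2_div_le hm

theorem isBigO_pow_S1_div_P {d L : ℕ} (hdL : 2 ≤ d * L) :
    (fun n : ℕ => (n : ℝ) ^ (d * L - 2)) =O[atTop] fun n => S1 d L n / P L n :=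
  (isBigO_const_mul_self ((L : ℝ) * (d : ℝ) ^ (d * (L - 1)) * (d.factorial : ℝ)) _ _).congr'
    (by
      filter_upwards [eventually_ne_atTop 0] with n hn
      obtain ⟨hd, hL⟩ := Nat.mul_ne_zero_iff.1 (by omega : d * L ≠ 0)
      rw [S1_div_P hdL hn, mul_div_cancel₀]
      positivity)
    EventuallyEq.rfl

theorem stmt_19_general (d L : ℕ)
    (hcond : 2 * (d - 1) < d * L - 2) :
    (∀ n : ℕ, 1 ≤ n →
      (n : ℝ) ^ (d * L - 2) / ((L : ℝ) * (d : ℝ) ^ (d * (L - 1)) * (d.factorial : ℝ))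
        ≤ S1 d L n / (P L n : ℝ)) ∧
    ((fun n : ℕ => S2 d (L * n ^ 2) / (P L n : ℝ))
      =O[Filter.atTop] fun n : ℕ => ((L * n ^ 2 : ℕ) : ℝ) ^ (d - 1)) ∧
    Filter.Tendsto (fun n : ℕ => (S1 d L n / (P L n : ℝ)) / (S2 d (L * n ^ 2) / (P L n : ℝ)))
      Filter.atTop Filter.atTop := by
  have hdL : 2 ≤ d * L := by omega
  obtain ⟨hd, hL⟩ := Nat.mul_ne_zero_iff.1 (by omega : d * L ≠ 0)
  have hm : Tendsto (fun n : ℕ => L * n ^ 2) atTop atTop :=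
    tendsto_atTop_mono (fun n => Nat.le_mul_of_pos_left _ (Nat.pos_of_ne_zero hL))
      (tendsto_pow_atTop two_ne_zero)
  have hS2 : (fun n : ℕ => S2 d (L * n ^ 2) / (P L n : ℝ))
      =O[atTop] fun n : ℕ => ((L * n ^ 2 : ℕ) : ℝ) ^ (d - 1) :=
    (S2_div_isBigO d).comp_tendsto hm
  have hpow : (fun n : ℕ => ((L * n ^ 2 : ℕ) : ℝ) ^ (d - 1))
      =o[atTop] fun n : ℕ => (n : ℝ) ^ (d * L - 2) := by
    have hsq : (fun n : ℕ => ((L * n ^ 2 : ℕ) : ℝ) ^ (d - 1))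
        =O[atTop] fun n : ℕ => (n : ℝ) ^ (2 * (d - 1)) := by
      simpa only [Nat.cast_mul, Nat.cast_pow, mul_pow, ← pow_mul]
        using isBigO_const_mul_self ((L : ℝ) ^ (d - 1)) _ atTop
    exact hsq.trans_isLittleO <|
      (isLittleO_pow_pow_atTop_of_lt hcond).comp_tendsto tendsto_natCast_atTop_atTop
  refine ⟨fun n hn => (S1_div_P hdL (Nat.one_le_iff_ne_zero.1 hn)).ge, hS2,
    tendsto_div_atTop_of_isLittleO
      (hS2.trans_isLittleO (hpow.trans_isBigO (isBigO_pow_S1_div_P hdL))) ?_ ?_⟩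
  · filter_upwards [eventually_ne_atTop 0] with n hn
    rw [S1_div_P hdL hn]
    positivity
  · filter_upwards [eventually_ne_atTop 0] with n hn
    exact div_pos (S2_pos hd _) (by unfold P; positivity)

/-- for fixed `d ≥ 3`, `L ≥ 2` with `dL - 2 > 2(d-1)`:
the deep-network simplices-per-parameter ratio `S1/P1` is at least
`n^{dL-2}/(L·d^{d(L-1)}·d!)`; the shallow-network ratio `S2/P2` (with `m = L·n²` hidden
neurons) is `O((L·n²)^{d-1})`; and hence `(S1/P1)/(S2/P2) → ∞` as `n → ∞`. -/
theorem stmt_19 (d L : ℕ) (hd : 3 ≤ d) (hL : 2 ≤ L)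
    (hcond : 2 * (d - 1) < d * L - 2) :
    (∀ n : ℕ, 1 ≤ n →
      (n : ℝ) ^ (d * L - 2) / ((L : ℝ) * (d : ℝ) ^ (d * (L - 1)) * (d.factorial : ℝ))
        ≤ S1 d L n / (P L n : ℝ)) ∧
    ((fun n : ℕ => S2 d (L * n ^ 2) / (P L n : ℝ))
      =O[Filter.atTop] fun n : ℕ => ((L * n ^ 2 : ℕ) : ℝ) ^ (d - 1)) ∧
    Filter.Tendsto (fun n : ℕ => (S1 d L n / (P L n : ℝ)) / (S2 d (L * n ^ 2) / (P L n : ℝ)))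
      Filter.atTop Filter.atTop :=
  stmt_19_general d L hcond
end
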